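/- arXiv:2308.15870 — 2 statements merged into one kernel-verified Lean document; each statement's English description precedes it below -/
import Mathlib

section
/- Let Π_R⁺ be the Ross program Π_R extended with the constraint ':- Do(mail), Do(burn)' (stating that mailing and burning the letter are incompatible). Then (Π_R⁺, W_R) has a unique optimal answer set, namely A1(mail) ∪ A3(burn); in particular the answer set in which the agent chooses to burn the letter is no longer optimal. -/
namespace ASP

/-- Atoms: the predicates of the common core applied to a constant. -/
inductive Atom (C : Type) where
  | act : C → Atom C
  | O : C → Atom C
  | F : C → Atom C
  | Do : C → Atom C
  | Dia : C → Atom C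
  | Happens : C → Atom C
  | Location : C → Atom C
  deriving DecidableEq

/-- A literal is an atom or its strong negation. -/
inductive Lit (C : Type) where
  | pos : Atom C → Lit C
  | neg : Atom C → Lit C
  deriving DecidableEq

/-- A ground rule: head, positive body, default-negated body. -/
structure Rule (C : Type) where
  head : Set (Lit C)
  pos : Set (Lit C)
  neg : Set (Lit C)

variable {C : Type}

/-- S satisfies the body of r: pos(r) ⊆ S and neg(r) ∩ S = ∅. -/
def SatBody (S : Set (Lit C)) (r : Rule C) : Prop :=
  r.pos ⊆ S ∧ r.neg ∩ S = ∅

/-- S satisfies the head of r: H(r) ∩ S ≠ ∅. -/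
def SatHead (S : Set (Lit C)) (r : Rule C) : Prop :=
  (r.head ∩ S).Nonempty

/-- S satisfies a rule r: if S satisfies the body then S satisfies the head. -/
def Satisfies (S : Set (Lit C)) (r : Rule C) : Prop :=
  SatBody S r → SatHead S r

/-- A set of literals is consistent if it contains no atom together with
its strong negation. -/
def Consistent (S : Set (Lit C)) : Prop :=
  ∀ p : Atom C, ¬ (Lit.pos p ∈ S ∧ Lit.neg p ∈ S)

/-- The reduct Π(S): the rules of Π whose body is satisfied by S. -/
def reduct (P : Set (Rule C)) (S : Set (Lit C)) : Set (Rule C) :=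
  {r ∈ P | SatBody S r}

/-- S is an answer set of Π iff S is consistent, S satisfies the head of every
rule in the reduct Π(S), and no proper subset of S satisfies every rule of Π(S). -/
def IsAnswerSet (P : Set (Rule C)) (S : Set (Lit C)) : Prop :=
  Consistent S ∧ (∀ r ∈ reduct P S, SatHead S r) ∧
    ∀ S' : Set (Lit C), S' ⊂ S → ¬ (∀ r ∈ reduct P S, Satisfies S' r)

/-- The common core program CC(a): the fact act(a) and rules (1)–(9). -/
def CC (a : C) : Set (Rule C) :=
  { ⟨{.pos (.act a)}, ∅, ∅⟩,                                      -- fact act(a)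
    ⟨{.pos (.O a), .neg (.O a)}, {.pos (.act a)}, ∅⟩,             -- (1)
    ⟨{.pos (.F a), .neg (.F a)}, {.pos (.act a)}, ∅⟩,             -- (2)
    ⟨∅, {.pos (.O a), .neg (.Dia a)}, ∅⟩,                         -- (3)
    ⟨{.neg (.Dia a)}, {.neg (.Do a), .pos (.act a)}, ∅⟩,          -- (4)
    ⟨∅, {.pos (.O a), .pos (.F a)}, ∅⟩,                           -- (5)
    ⟨{.pos (.Do a), .neg (.Do a)}, {.pos (.act a)}, ∅⟩,           -- (6)
    ⟨∅, {.pos (.F a), .pos (.Do a)}, ∅⟩,                          -- (7)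
    ⟨{.pos (.Happens a)}, {.pos (.Do a)}, ∅⟩,                     -- (8)
    ⟨∅, {.pos (.Do a), .neg (.Dia a)}, ∅⟩ }                       -- (9)

def A1 (a : C) : Set (Lit C) :=
  {.pos (.act a), .pos (.O a), .neg (.F a), .pos (.Do a), .pos (.Happens a)}

def A2 (a : C) : Set (Lit C) :=
  {.pos (.act a), .pos (.F a), .neg (.O a), .neg (.Do a), .neg (.Dia a)}

def A3 (a : C) : Set (Lit C) :=
  {.pos (.act a), .neg (.F a), .neg (.O a), .neg (.Do a), .neg (.Dia a)}

def A4 (a : C) : Set (Lit C) :=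
  {.pos (.act a), .neg (.F a), .neg (.O a), .pos (.Do a), .pos (.Happens a)}

/-- A weak constraint: body (pos, neg), weight w and level l. -/
structure WeakConstraint (C : Type) where
  pos : Finset (Lit C)
  neg : Finset (Lit C)
  w : ℕ
  l : ℕ
  deriving DecidableEq

/-- S violates a weak constraint c iff pos(c) ⊆ S and neg(c) ∩ S = ∅. -/
def Violates (S : Set (Lit C)) (c : WeakConstraint C) : Prop :=
  ↑c.pos ⊆ S ∧ ↑c.neg ∩ S = ∅

open Classical in
/-- The penalty of S at level lvl: the sum of the weights of the violated
weak constraints of level lvl. -/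
noncomputable def penalty (W : Finset (WeakConstraint C)) (S : Set (Lit C))
    (lvl : ℕ) : ℕ :=
  ∑ c ∈ W, if c.l = lvl ∧ Violates S c then c.w else 0

/-- S is an optimal answer set of Π w.r.t. W iff S is an answer set of Π and
there is no answer set S' of Π and level lvl with strictly smaller penalty at
lvl and equal penalties at all higher levels. -/
def IsOptimalAnswerSet (P : Set (Rule C)) (W : Finset (WeakConstraint C))
    (S : Set (Lit C)) : Prop :=
  IsAnswerSet P S ∧
    ¬ ∃ (S' : Set (Lit C)) (lvl : ℕ), IsAnswerSet P S' ∧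
        penalty W S' lvl < penalty W S lvl ∧
        ∀ l', lvl < l' → penalty W S' l' = penalty W S l'

variable [DecidableEq C]

/-- WC(a): the weak constraints ':~ O(a) [1:1]' and ':~ F(a) [1:1]'. -/
def WC (a : C) : Finset (WeakConstraint C) :=
  { ⟨{.pos (.O a)}, ∅, 1, 1⟩, ⟨{.pos (.F a)}, ∅, 1, 1⟩ }


/-- The constants used in the concrete examples. -/
inductive Const where
  | mail | burn | meet | help | emergency | have_fence | have_white_fence | sea
  deriving DecidableEq


/-- The Ross program: CC(mail) ∪ CC(burn). -/
def RossProgram : Set (Rule Const) := CC Const.mail ∪ CC Const.burn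

/-- The weak constraints of the Ross program:
WC(mail) ∪ WC(burn) ∪ { ':~ ¬O(mail) [1:2]' }. -/
def RossW : Finset (WeakConstraint Const) :=
  WC Const.mail ∪ WC Const.burn ∪ { ⟨{.neg (.O .mail)}, ∅, 1, 2⟩ }


/-- The Ross program extended with the constraint ':- Do(mail), Do(burn)'. -/
def RossProgramPlus : Set (Rule Const) :=
  RossProgram ∪ { ⟨∅, {.pos (.Do .mail), .pos (.Do .burn)}, ∅⟩ }


open Const

abbrev AA : Set (Lit Const) := A1 Const.mail ∪ A3 Const.burn

def c1 : WeakConstraint Const := ⟨{.pos (.O .mail)}, ∅, 1, 1⟩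
def c2 : WeakConstraint Const := ⟨{.pos (.F .mail)}, ∅, 1, 1⟩
def c3 : WeakConstraint Const := ⟨{.pos (.O .burn)}, ∅, 1, 1⟩
def c4 : WeakConstraint Const := ⟨{.pos (.F .burn)}, ∅, 1, 1⟩
def c5 : WeakConstraint Const := ⟨{.neg (.O .mail)}, ∅, 1, 2⟩

lemma hW : RossW = {c1, c2, c3, c4, c5} := by decide

lemma A_sat : ∀ r ∈ RossProgramPlus, Satisfies AA r := by
  intro r hr
  simp only [RossProgramPlus, RossProgram, CC, Set.mem_union, Set.mem_insert_iff,
    Set.mem_singleton_iff] at hr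
  rcases hr with (((h|h|h|h|h|h|h|h|h|h)|(h|h|h|h|h|h|h|h|h|h))|h) <;> subst h
  · exact fun _ => ⟨Lit.pos (.act .mail), by simp, by simp [AA, A1, A3]⟩
  · exact fun _ => ⟨Lit.pos (.O .mail), by simp, by simp [AA, A1, A3]⟩
  · exact fun _ => ⟨Lit.neg (.F .mail), by simp, by simp [AA, A1, A3]⟩
  · intro hb
    have h2 : Lit.neg (Atom.Dia Const.mail) ∈ AA := hb.1 (by simp)
    simp [AA, A1, A3] at h2
  · intro hb
    have h2 : Lit.neg (Atom.Do Const.mail) ∈ AA := hb.1 (by simp)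
    simp [AA, A1, A3] at h2
  · intro hb
    have h2 : Lit.pos (Atom.F Const.mail) ∈ AA := hb.1 (by simp)
    simp [AA, A1, A3] at h2
  · exact fun _ => ⟨Lit.pos (.Do .mail), by simp, by simp [AA, A1, A3]⟩
  · intro hb
    have h2 : Lit.pos (Atom.F Const.mail) ∈ AA := hb.1 (by simp)
    simp [AA, A1, A3] at h2
  · exact fun _ => ⟨Lit.pos (.Happens .mail), by simp, by simp [AA, A1, A3]⟩
  · intro hb
    have h2 : Lit.neg (Atom.Dia Const.mail) ∈ AA := hb.1 (by simp)
    simp [AA, A1, A3] at h2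
  · exact fun _ => ⟨Lit.pos (.act .burn), by simp, by simp [AA, A1, A3]⟩
  · exact fun _ => ⟨Lit.neg (.O .burn), by simp, by simp [AA, A1, A3]⟩
  · exact fun _ => ⟨Lit.neg (.F .burn), by simp, by simp [AA, A1, A3]⟩
  · intro hb
    have h2 : Lit.pos (Atom.O Const.burn) ∈ AA := hb.1 (by simp)
    simp [AA, A1, A3] at h2
  · exact fun _ => ⟨Lit.neg (.Dia .burn), by simp, by simp [AA, A1, A3]⟩
  · intro hb
    have h2 : Lit.pos (Atom.O Const.burn) ∈ AA := hb.1 (by simp)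
    simp [AA, A1, A3] at h2
  · exact fun _ => ⟨Lit.neg (.Do .burn), by simp, by simp [AA, A1, A3]⟩
  · intro hb
    have h2 : Lit.pos (Atom.F Const.burn) ∈ AA := hb.1 (by simp)
    simp [AA, A1, A3] at h2
  · intro hb
    have h2 : Lit.pos (Atom.Do Const.burn) ∈ AA := hb.1 (by simp)
    simp [AA, A1, A3] at h2
  · intro hb
    have h2 : Lit.pos (Atom.Do Const.burn) ∈ AA := hb.1 (by simp)
    simp [AA, A1, A3] at h2
  · intro hb
    have h2 : Lit.pos (Atom.Do Const.burn) ∈ AA := hb.1 (by simp)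
    simp [AA, A1, A3] at h2

lemma cons_AA : Consistent AA := by
  rintro p ⟨hp, hn⟩
  simp [AA, A1, A3] at hp hn
  rcases hp with h|h|h|h|h <;> subst h <;> simp_all

lemma memCC0 (a : Const) : (⟨{.pos (.act a)}, ∅, ∅⟩ : Rule Const) ∈ CC a :=
  Set.mem_insert _ _
lemma memCC1 (a : Const) : (⟨{.pos (.O a), .neg (.O a)}, {.pos (.act a)}, ∅⟩ : Rule Const) ∈ CC a :=
  Set.mem_insert_of_mem _ (Set.mem_insert _ _)
lemma memCC2 (a : Const) : (⟨{.pos (.F a), .neg (.F a)}, {.pos (.act a)}, ∅⟩ : Rule Const) ∈ CC a :=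
  Set.mem_insert_of_mem _ (Set.mem_insert_of_mem _ (Set.mem_insert _ _))
lemma memCC3 (a : Const) : (⟨∅, {.pos (.O a), .neg (.Dia a)}, ∅⟩ : Rule Const) ∈ CC a :=
  Set.mem_insert_of_mem _ (Set.mem_insert_of_mem _ (Set.mem_insert_of_mem _ (Set.mem_insert _ _)))
lemma memCC4 (a : Const) : (⟨{.neg (.Dia a)}, {.neg (.Do a), .pos (.act a)}, ∅⟩ : Rule Const) ∈ CC a :=
  Set.mem_insert_of_mem _ (Set.mem_insert_of_mem _ (Set.mem_insert_of_mem _ (Set.mem_insert_of_mem _ (Set.mem_insert _ _))))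
lemma memCC5 (a : Const) : (⟨∅, {.pos (.O a), .pos (.F a)}, ∅⟩ : Rule Const) ∈ CC a :=
  Set.mem_insert_of_mem _ (Set.mem_insert_of_mem _ (Set.mem_insert_of_mem _ (Set.mem_insert_of_mem _ (Set.mem_insert_of_mem _ (Set.mem_insert _ _)))))
lemma memCC6 (a : Const) : (⟨{.pos (.Do a), .neg (.Do a)}, {.pos (.act a)}, ∅⟩ : Rule Const) ∈ CC a :=
  Set.mem_insert_of_mem _ (Set.mem_insert_of_mem _ (Set.mem_insert_of_mem _ (Set.mem_insert_of_mem _ (Set.mem_insert_of_mem _ (Set.mem_insert_of_mem _ (Set.mem_insert _ _))))))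
lemma memCC7 (a : Const) : (⟨∅, {.pos (.F a), .pos (.Do a)}, ∅⟩ : Rule Const) ∈ CC a :=
  Set.mem_insert_of_mem _ (Set.mem_insert_of_mem _ (Set.mem_insert_of_mem _ (Set.mem_insert_of_mem _ (Set.mem_insert_of_mem _ (Set.mem_insert_of_mem _ (Set.mem_insert_of_mem _ (Set.mem_insert _ _)))))))
lemma memCC8 (a : Const) : (⟨{.pos (.Happens a)}, {.pos (.Do a)}, ∅⟩ : Rule Const) ∈ CC a :=
  Set.mem_insert_of_mem _ (Set.mem_insert_of_mem _ (Set.mem_insert_of_mem _ (Set.mem_insert_of_mem _ (Set.mem_insert_of_mem _ (Set.mem_insert_of_mem _ (Set.mem_insert_of_mem _ (Set.mem_insert_of_mem _ (Set.mem_insert _ _))))))))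
lemma memCC9 (a : Const) : (⟨∅, {.pos (.Do a), .neg (.Dia a)}, ∅⟩ : Rule Const) ∈ CC a :=
  Set.mem_insert_of_mem _ (Set.mem_insert_of_mem _ (Set.mem_insert_of_mem _ (Set.mem_insert_of_mem _ (Set.mem_insert_of_mem _ (Set.mem_insert_of_mem _ (Set.mem_insert_of_mem _ (Set.mem_insert_of_mem _ (Set.mem_insert_of_mem _ rfl))))))))

lemma plus_mail {r : Rule Const} (h : r ∈ CC Const.mail) : r ∈ RossProgramPlus :=
  Or.inl (Or.inl h)
lemma plus_burn {r : Rule Const} (h : r ∈ CC Const.burn) : r ∈ RossProgramPlus :=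
  Or.inl (Or.inr h)
lemma plus_new : (⟨∅, {.pos (.Do .mail), .pos (.Do .burn)}, ∅⟩ : Rule Const) ∈ RossProgramPlus :=
  Or.inr rfl

lemma head1 {S' : Set (Lit Const)} {x : Lit Const}
    (h : (({x} : Set (Lit Const)) ∩ S').Nonempty) : x ∈ S' := by
  obtain ⟨z, hz, hzS⟩ := h
  rw [Set.mem_singleton_iff] at hz; subst hz; exact hzS

lemma head2 {S' : Set (Lit Const)} {x y : Lit Const}
    (h : (({x, y} : Set (Lit Const)) ∩ S').Nonempty) : x ∈ S' ∨ y ∈ S' := by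
  obtain ⟨z, hz, hzS⟩ := h
  rcases hz with rfl | hz
  · exact Or.inl hzS
  · rw [Set.mem_singleton_iff] at hz; subst hz; exact Or.inr hzS

lemma min_AA : ∀ S' : Set (Lit Const), S' ⊂ AA →
    ¬ (∀ r ∈ reduct RossProgramPlus AA, Satisfies S' r) := by
  intro S' hsub hsat
  have hS'A : S' ⊆ AA := hsub.subset
  have h1 : Lit.pos (.act .mail) ∈ S' :=
    head1 (hsat _ ⟨plus_mail (memCC0 _), by simp [SatBody]⟩ (by simp [SatBody]))
  have h1b : Lit.pos (.act .burn) ∈ S' :=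
    head1 (hsat _ ⟨plus_burn (memCC0 _), by simp [SatBody]⟩ (by simp [SatBody]))
  have h2 : Lit.pos (.O .mail) ∈ S' := by
    rcases head2 (hsat _ ⟨plus_mail (memCC1 _), ⟨by simp [AA, A1, A3], by simp⟩⟩
        ⟨by simpa using h1, by simp⟩) with h | h
    · exact h
    · exact absurd (hS'A h) (by simp [AA, A1, A3])
  have h3 : Lit.neg (.F .mail) ∈ S' := by
    rcases head2 (hsat _ ⟨plus_mail (memCC2 _), ⟨by simp [AA, A1, A3], by simp⟩⟩
        ⟨by simpa using h1, by simp⟩) with h | h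
    · exact absurd (hS'A h) (by simp [AA, A1, A3])
    · exact h
  have h4 : Lit.pos (.Do .mail) ∈ S' := by
    rcases head2 (hsat _ ⟨plus_mail (memCC6 _), ⟨by simp [AA, A1, A3], by simp⟩⟩
        ⟨by simpa using h1, by simp⟩) with h | h
    · exact h
    · exact absurd (hS'A h) (by simp [AA, A1, A3])
  have h5 : Lit.pos (.Happens .mail) ∈ S' :=
    head1 (hsat _ ⟨plus_mail (memCC8 _), ⟨by simp [AA, A1, A3], by simp⟩⟩
      ⟨by simpa using h4, by simp⟩)
  have h6 : Lit.neg (.O .burn) ∈ S' := by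
    rcases head2 (hsat _ ⟨plus_burn (memCC1 _), ⟨by simp [AA, A1, A3], by simp⟩⟩
        ⟨by simpa using h1b, by simp⟩) with h | h
    · exact absurd (hS'A h) (by simp [AA, A1, A3])
    · exact h
  have h7 : Lit.neg (.F .burn) ∈ S' := by
    rcases head2 (hsat _ ⟨plus_burn (memCC2 _), ⟨by simp [AA, A1, A3], by simp⟩⟩
        ⟨by simpa using h1b, by simp⟩) with h | h
    · exact absurd (hS'A h) (by simp [AA, A1, A3])
    · exact h
  have h8 : Lit.neg (.Do .burn) ∈ S' := by
    rcases head2 (hsat _ ⟨plus_burn (memCC6 _), ⟨by simp [AA, A1, A3], by simp⟩⟩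
        ⟨by simpa using h1b, by simp⟩) with h | h
    · exact absurd (hS'A h) (by simp [AA, A1, A3])
    · exact h
  have hbody9 : SatBody S' ⟨{.neg (.Dia .burn)}, {.neg (.Do .burn), .pos (.act .burn)}, ∅⟩ := by
    refine ⟨?_, by simp⟩
    intro x hx
    rcases hx with rfl | hx
    · exact h8
    · rw [Set.mem_singleton_iff] at hx; subst hx; exact h1b
  have h9 : Lit.neg (.Dia .burn) ∈ S' :=
    head1 (hsat _ ⟨plus_burn (memCC4 _), ⟨by simp [Set.insert_subset_iff, AA, A1, A3], by simp⟩⟩ hbody9)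
  refine hsub.2 ?_
  intro x hx
  simp only [AA, A1, A3, Set.mem_union, Set.mem_insert_iff, Set.mem_singleton_iff] at hx
  rcases hx with (rfl|rfl|rfl|rfl|rfl)|(rfl|rfl|rfl|rfl|rfl) <;> assumption

lemma ansA : IsAnswerSet RossProgramPlus AA :=
  ⟨cons_AA, fun r hr => A_sat r hr.1 hr.2, min_AA⟩

lemma sub1 {S : Set (Lit Const)} {x : Lit Const} (hx : x ∈ S) :
    ({x} : Set (Lit Const)) ⊆ S := Set.singleton_subset_iff.2 hx

lemma sub2 {S : Set (Lit Const)} {x y : Lit Const} (hx : x ∈ S) (hy : y ∈ S) :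
    ({x, y} : Set (Lit Const)) ⊆ S := by
  intro z hz
  rcases hz with rfl | hz
  · exact hx
  · rw [Set.mem_singleton_iff] at hz; subst hz; exact hy

lemma no_head {S : Set (Lit Const)} (h : ((∅ : Set (Lit Const)) ∩ S).Nonempty) : False := by
  simp at h

open Classical in
lemma penalty_eq (S : Set (Lit Const)) (lvl : ℕ) : penalty RossW S lvl =
    (if 1 = lvl ∧ Lit.pos (.O .mail) ∈ S then 1 else 0) +
    (if 1 = lvl ∧ Lit.pos (.F .mail) ∈ S then 1 else 0) +
    (if 1 = lvl ∧ Lit.pos (.O .burn) ∈ S then 1 else 0) +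
    (if 1 = lvl ∧ Lit.pos (.F .burn) ∈ S then 1 else 0) +
    (if 2 = lvl ∧ Lit.neg (.O .mail) ∈ S then 1 else 0) := by
  rw [hW, penalty]
  rw [Finset.sum_insert (by decide), Finset.sum_insert (by decide),
    Finset.sum_insert (by decide), Finset.sum_insert (by decide), Finset.sum_singleton]
  simp only [c1, c2, c3, c4, c5, Violates, Finset.coe_singleton, Set.singleton_subset_iff,
    Finset.coe_empty, Set.empty_inter, and_true, add_assoc]

lemma pen_ne (S : Set (Lit Const)) (l : ℕ) (h1 : l ≠ 1) (h2 : l ≠ 2) :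
    penalty RossW S l = 0 := by
  rw [penalty_eq]
  rw [if_neg (fun h => h1 h.1.symm), if_neg (fun h => h1 h.1.symm),
    if_neg (fun h => h1 h.1.symm), if_neg (fun h => h1 h.1.symm),
    if_neg (fun h => h2 h.1.symm)]

open Classical in
lemma pen2_eq (S : Set (Lit Const)) :
    penalty RossW S 2 = if Lit.neg (.O .mail) ∈ S then 1 else 0 := by
  rw [penalty_eq]
  rw [if_neg (by omega : ¬(1 = 2 ∧ _)), if_neg (by omega : ¬(1 = 2 ∧ _)),
    if_neg (by omega : ¬(1 = 2 ∧ _)), if_neg (by omega : ¬(1 = 2 ∧ _))]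
  simp

lemma penA1 : penalty RossW AA 1 = 1 := by
  rw [penalty_eq]
  rw [if_pos ⟨rfl, by simp [AA, A1, A3]⟩, if_neg (by simp [AA, A1, A3]),
    if_neg (by simp [AA, A1, A3]), if_neg (by simp [AA, A1, A3]),
    if_neg (by simp [AA, A1, A3])]

lemma penA2 : penalty RossW AA 2 = 0 := by
  rw [pen2_eq, if_neg (by simp [AA, A1, A3])]

lemma pen1_pos {S : Set (Lit Const)} (h : Lit.pos (.O .mail) ∈ S) :
    1 ≤ penalty RossW S 1 := by
  rw [penalty_eq, if_pos ⟨rfl, h⟩]; omega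

open Classical in
lemma pen1_two {S : Set (Lit Const)} (hm : Lit.pos (.O .mail) ∈ S)
    (hb : Lit.pos (.O .burn) ∈ S ∨ Lit.pos (.F .burn) ∈ S) :
    2 ≤ penalty RossW S 1 := by
  rw [penalty_eq, if_pos ⟨rfl, hm⟩]
  rcases hb with hb | hb
  · rw [show (if 1 = 1 ∧ Lit.pos (Atom.O Const.burn) ∈ S then 1 else 0) = 1 from
      if_pos ⟨rfl, hb⟩]
    omega
  · rw [show (if 1 = 1 ∧ Lit.pos (Atom.F Const.burn) ∈ S then 1 else 0) = 1 from
      if_pos ⟨rfl, hb⟩]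
    omega

lemma pen2_pos {S : Set (Lit Const)} (h : Lit.neg (.O .mail) ∈ S) :
    1 ≤ penalty RossW S 2 := by
  rw [pen2_eq, if_pos h]

lemma pen1_zero {S : Set (Lit Const)} (h : penalty RossW S 1 = 0) :
    Lit.pos (.O .mail) ∉ S := fun hm => by have := pen1_pos hm; omega

lemma pen2_zero {S : Set (Lit Const)} (h : penalty RossW S 2 = 0) :
    Lit.neg (.O .mail) ∉ S := fun hm => by have := pen2_pos hm; omega

lemma act_mail_mem {S : Set (Lit Const)} (h : IsAnswerSet RossProgramPlus S) :
    Lit.pos (.act .mail) ∈ S :=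
  head1 (h.2.1 _ ⟨plus_mail (memCC0 _), by simp [SatBody]⟩)

lemma act_burn_mem {S : Set (Lit Const)} (h : IsAnswerSet RossProgramPlus S) :
    Lit.pos (.act .burn) ∈ S :=
  head1 (h.2.1 _ ⟨plus_burn (memCC0 _), by simp [SatBody]⟩)

lemma Om_total {S : Set (Lit Const)} (h : IsAnswerSet RossProgramPlus S) :
    Lit.pos (.O .mail) ∈ S ∨ Lit.neg (.O .mail) ∈ S :=
  head2 (h.2.1 _ ⟨plus_mail (memCC1 _), ⟨sub1 (act_mail_mem h), by simp⟩⟩)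

/-- Any answer set of the extended Ross program in which ¬O(mail), O(burn),
F(burn) do not occur is exactly A1(mail) ∪ A3(burn). -/
lemma subset_char {S : Set (Lit Const)} (h : IsAnswerSet RossProgramPlus S)
    (hOm : Lit.neg (.O .mail) ∉ S) (hOb : Lit.pos (.O .burn) ∉ S)
    (hFb : Lit.pos (.F .burn) ∉ S) : S = AA := by
  have hact_m := act_mail_mem h
  have hact_b := act_burn_mem h
  have hO : Lit.pos (.O .mail) ∈ S := (Om_total h).resolve_right hOm
  -- ¬Dia(mail) ∉ S via constraint (3)
  have hnDia_m : Lit.neg (.Dia .mail) ∉ S := fun hc =>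
    no_head (h.2.1 _ ⟨plus_mail (memCC3 _), ⟨sub2 hO hc, by simp⟩⟩)
  -- ¬Do(mail) ∉ S via rule (4)
  have hnDo_m : Lit.neg (.Do .mail) ∉ S := fun hc =>
    hnDia_m (head1 (h.2.1 _ ⟨plus_mail (memCC4 _), ⟨sub2 hc hact_m, by simp⟩⟩))
  -- Do(mail) ∈ S via rule (6)
  have hDo_m : Lit.pos (.Do .mail) ∈ S :=
    (head2 (h.2.1 _ ⟨plus_mail (memCC6 _), ⟨sub1 hact_m, by simp⟩⟩)).resolve_right hnDo_m
  -- F(mail) ∉ S via constraint (7)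
  have hF_m : Lit.pos (.F .mail) ∉ S := fun hc =>
    no_head (h.2.1 _ ⟨plus_mail (memCC7 _), ⟨sub2 hc hDo_m, by simp⟩⟩)
  -- ¬F(mail) ∈ S via rule (2)
  have hnF_m : Lit.neg (.F .mail) ∈ S :=
    (head2 (h.2.1 _ ⟨plus_mail (memCC2 _), ⟨sub1 hact_m, by simp⟩⟩)).resolve_left hF_m
  -- Happens(mail) ∈ S via rule (8)
  have hHap : Lit.pos (.Happens .mail) ∈ S :=
    head1 (h.2.1 _ ⟨plus_mail (memCC8 _), ⟨sub1 hDo_m, by simp⟩⟩)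
  -- Do(burn) ∉ S via the new constraint
  have hDo_b : Lit.pos (.Do .burn) ∉ S := fun hc =>
    no_head (h.2.1 _ ⟨plus_new, ⟨sub2 hDo_m hc, by simp⟩⟩)
  -- ¬Do(burn) ∈ S via rule (6)
  have hnDo_b : Lit.neg (.Do .burn) ∈ S :=
    (head2 (h.2.1 _ ⟨plus_burn (memCC6 _), ⟨sub1 hact_b, by simp⟩⟩)).resolve_left hDo_b
  -- ¬Dia(burn) ∈ S via rule (4)
  have hnDia_b : Lit.neg (.Dia .burn) ∈ S :=
    head1 (h.2.1 _ ⟨plus_burn (memCC4 _), ⟨sub2 hnDo_b hact_b, by simp⟩⟩)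
  -- ¬F(burn) ∈ S via rule (2)
  have hnF_b : Lit.neg (.F .burn) ∈ S :=
    (head2 (h.2.1 _ ⟨plus_burn (memCC2 _), ⟨sub1 hact_b, by simp⟩⟩)).resolve_left hFb
  -- ¬O(burn) ∈ S via rule (1)
  have hnO_b : Lit.neg (.O .burn) ∈ S :=
    (head2 (h.2.1 _ ⟨plus_burn (memCC1 _), ⟨sub1 hact_b, by simp⟩⟩)).resolve_left hOb
  have hAS : AA ⊆ S := by
    intro x hx
    simp only [AA, A1, A3, Set.mem_union, Set.mem_insert_iff, Set.mem_singleton_iff] at hx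
    rcases hx with (rfl|rfl|rfl|rfl|rfl)|(rfl|rfl|rfl|rfl|rfl) <;> assumption
  by_contra hne
  refine h.2.2 AA ⟨hAS, fun hSA => ?_⟩ (fun r hr => A_sat r hr.1)
  exact hne (Set.Subset.antisymm hSA hAS)


/-- the extended Ross program has a unique optimal answer set,
namely A1(mail) ∪ A3(burn). -/
theorem stmt16 :
    ∀ S : Set (Lit Const), IsOptimalAnswerSet RossProgramPlus RossW S ↔
      S = A1 Const.mail ∪ A3 Const.burn := by
  intro S
  constructor
  · rintro ⟨hans, hno⟩
    by_cases hOm : Lit.neg (.O .mail) ∈ S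
    · exfalso
      refine hno ⟨AA, 2, ansA, ?_, ?_⟩
      · rw [penA2]; exact lt_of_lt_of_le Nat.zero_lt_one (pen2_pos hOm)
      · intro l' hl'
        rw [pen_ne _ l' (by omega) (by omega), pen_ne _ l' (by omega) (by omega)]
    · have hO : Lit.pos (.O .mail) ∈ S := (Om_total hans).resolve_right hOm
      by_cases hb : Lit.pos (.O .burn) ∈ S ∨ Lit.pos (.F .burn) ∈ S
      · exfalso
        refine hno ⟨AA, 1, ansA, ?_, ?_⟩
        · rw [penA1]; exact lt_of_lt_of_le Nat.one_lt_two (pen1_two hO hb)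
        · intro l' hl'
          rcases Nat.lt_or_ge l' 3 with hl3 | hl3
          · have : l' = 2 := by omega
            subst this
            rw [penA2, pen2_eq, if_neg hOm]
          · rw [pen_ne _ l' (by omega) (by omega), pen_ne _ l' (by omega) (by omega)]
      · push_neg at hb
        exact subset_char hans hOm hb.1 hb.2
  · rintro rfl
    refine ⟨ansA, ?_⟩
    rintro ⟨S', lvl, hans', hlt, hge⟩
    have hlvl : lvl = 1 := by
      by_contra hne
      rcases eq_or_ne lvl 2 with rfl | hne2
      · rw [penA2] at hlt; omega
      · rw [pen_ne S' lvl hne hne2, pen_ne AA lvl hne hne2] at hlt; omega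
    subst hlvl
    rw [penA1] at hlt
    have h0 : penalty RossW S' 1 = 0 := by omega
    have h2 : penalty RossW S' 2 = 0 := by rw [hge 2 Nat.one_lt_two, penA2]
    rcases Om_total hans' with hm | hm
    · exact pen1_zero h0 hm
    · exact pen2_zero h2 hm

end ASP
end

section
/- The Plato program (Π_P, W_P) has a unique optimal answer set, namely U = {act(meet), act(help), Happens(emergency), O(help), ¬F(help), Do(help), Happens(help), ¬O(meet), ¬F(meet), ¬Do(meet), ¬Dia(meet)}; in particular the unique optimal answer set contains the obligation O(help) to rush the child to the hospital and does not contain the obligation O(meet) to meet the friend. -/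
namespace ASP

variable {C : Type}

variable [DecidableEq C]

/-- The Plato program: CC(meet) ∪ CC(help) together with the fact
Happens(emergency) and the constraint ':- Do(help), Do(meet)'. -/
def PlatoProgram : Set (Rule Const) :=
  CC Const.meet ∪ CC Const.help ∪
    { ⟨{.pos (.Happens .emergency)}, ∅, ∅⟩,
      ⟨∅, {.pos (.Do .help), .pos (.Do .meet)}, ∅⟩ }

/-- The weak constraints of the Plato program. -/
def PlatoW : Finset (WeakConstraint Const) :=
  WC Const.meet ∪ WC Const.help ∪
    { ⟨{.neg (.O .help), .pos (.Happens .emergency)}, ∅, 1, 3⟩,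
      ⟨{.neg (.O .meet)}, ∅, 1, 2⟩ }

/-- The expected unique optimal answer set of the Plato program. -/
def PlatoU : Set (Lit Const) :=
  {.pos (.act .meet), .pos (.act .help), .pos (.Happens .emergency),
   .pos (.O .help), .neg (.F .help), .pos (.Do .help), .pos (.Happens .help),
   .neg (.O .meet), .neg (.F .meet), .neg (.Do .meet), .neg (.Dia .meet)}



/-- Named rules of the common core. -/
def rFact (a : Const) : Rule Const := ⟨{.pos (.act a)}, ∅, ∅⟩
def r1 (a : Const) : Rule Const := ⟨{.pos (.O a), .neg (.O a)}, {.pos (.act a)}, ∅⟩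
def r2 (a : Const) : Rule Const := ⟨{.pos (.F a), .neg (.F a)}, {.pos (.act a)}, ∅⟩
def r3 (a : Const) : Rule Const := ⟨∅, {.pos (.O a), .neg (.Dia a)}, ∅⟩
def r4 (a : Const) : Rule Const := ⟨{.neg (.Dia a)}, {.neg (.Do a), .pos (.act a)}, ∅⟩
def r5 (a : Const) : Rule Const := ⟨∅, {.pos (.O a), .pos (.F a)}, ∅⟩
def r6 (a : Const) : Rule Const := ⟨{.pos (.Do a), .neg (.Do a)}, {.pos (.act a)}, ∅⟩
def r7 (a : Const) : Rule Const := ⟨∅, {.pos (.F a), .pos (.Do a)}, ∅⟩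
def r8 (a : Const) : Rule Const := ⟨{.pos (.Happens a)}, {.pos (.Do a)}, ∅⟩
def r9 (a : Const) : Rule Const := ⟨∅, {.pos (.Do a), .neg (.Dia a)}, ∅⟩
def rE : Rule Const := ⟨{.pos (.Happens .emergency)}, ∅, ∅⟩
def rDD : Rule Const := ⟨∅, {.pos (.Do .help), .pos (.Do .meet)}, ∅⟩

lemma CC_eq (a : Const) : CC a = {rFact a, r1 a, r2 a, r3 a, r4 a, r5 a, r6 a, r7 a, r8 a, r9 a} := rfl

lemma rFact_mem (a : Const) : rFact a ∈ CC a := by simp [CC_eq]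
lemma r1_mem (a : Const) : r1 a ∈ CC a := by simp [CC_eq]
lemma r2_mem (a : Const) : r2 a ∈ CC a := by simp [CC_eq]
lemma r3_mem (a : Const) : r3 a ∈ CC a := by simp [CC_eq]
lemma r4_mem (a : Const) : r4 a ∈ CC a := by simp [CC_eq]
lemma r5_mem (a : Const) : r5 a ∈ CC a := by simp [CC_eq]
lemma r6_mem (a : Const) : r6 a ∈ CC a := by simp [CC_eq]
lemma r7_mem (a : Const) : r7 a ∈ CC a := by simp [CC_eq]
lemma r8_mem (a : Const) : r8 a ∈ CC a := by simp [CC_eq]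
lemma r9_mem (a : Const) : r9 a ∈ CC a := by simp [CC_eq]
lemma rE_mem : rE ∈ PlatoProgram := by right; simp [rE]
lemma rDD_mem : rDD ∈ PlatoProgram := by right; simp [rDD]

lemma CC_meet_sub : CC Const.meet ⊆ PlatoProgram := fun r hr => Or.inl (Or.inl hr)
lemma CC_help_sub : CC Const.help ⊆ PlatoProgram := fun r hr => Or.inl (Or.inr hr)


section Facts
variable {S : Set (Lit Const)} (hS : IsAnswerSet PlatoProgram S)
include hS

lemma headSat {r : Rule Const} (hr : r ∈ PlatoProgram) (hb : SatBody S r) :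
    (r.head ∩ S).Nonempty := hS.2.1 r ⟨hr, hb⟩

lemma noBody {r : Rule Const} (hr : r ∈ PlatoProgram) (hhead : r.head = ∅) :
    ¬ SatBody S r := by
  intro hb
  have h := hS.2.1 r ⟨hr, hb⟩
  unfold SatHead at h
  rw [hhead] at h
  simp [Set.Nonempty] at h

variable {a : Const} (hsub : CC a ⊆ PlatoProgram)
include hsub

lemma act_mem : Lit.pos (.act a) ∈ S := by
  have h := headSat hS (hsub (rFact_mem a)) ⟨Set.empty_subset _, Set.empty_inter _⟩
  obtain ⟨x, hx1, hx2⟩ := h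
  simp [rFact] at hx1; subst hx1; exact hx2

lemma actBody {r : Rule Const} (hpos : r.pos = {Lit.pos (.act a)}) (hneg : r.neg = ∅) :
    SatBody S r := by
  refine ⟨?_, ?_⟩
  · rw [hpos]; simp [act_mem hS hsub]
  · rw [hneg]; exact Set.empty_inter _

lemma O_dich : Lit.pos (.O a) ∈ S ∨ Lit.neg (.O a) ∈ S := by
  have h := headSat hS (hsub (r1_mem a)) (actBody hS hsub rfl rfl)
  obtain ⟨x, hx1, hx2⟩ := h
  simp [r1] at hx1
  rcases hx1 with rfl | rfl
  · exact Or.inl hx2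
  · exact Or.inr hx2

lemma F_dich : Lit.pos (.F a) ∈ S ∨ Lit.neg (.F a) ∈ S := by
  have h := headSat hS (hsub (r2_mem a)) (actBody hS hsub rfl rfl)
  obtain ⟨x, hx1, hx2⟩ := h
  simp [r2] at hx1
  rcases hx1 with rfl | rfl
  · exact Or.inl hx2
  · exact Or.inr hx2

lemma Do_dich : Lit.pos (.Do a) ∈ S ∨ Lit.neg (.Do a) ∈ S := by
  have h := headSat hS (hsub (r6_mem a)) (actBody hS hsub rfl rfl)
  obtain ⟨x, hx1, hx2⟩ := h
  simp [r6] at hx1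
  rcases hx1 with rfl | rfl
  · exact Or.inl hx2
  · exact Or.inr hx2

lemma nDia_of_nDo (h : Lit.neg (.Do a) ∈ S) : Lit.neg (.Dia a) ∈ S := by
  have hh := headSat hS (hsub (r4_mem a))
    ⟨by simp [r4, Set.insert_subset_iff, h, act_mem hS hsub], Set.empty_inter _⟩
  obtain ⟨x, hx1, hx2⟩ := hh
  simp [r4] at hx1; subst hx1; exact hx2

lemma Happens_of_Do (h : Lit.pos (.Do a) ∈ S) : Lit.pos (.Happens a) ∈ S := by
  have hh := headSat hS (hsub (r8_mem a))
    ⟨by simp [r8, h], Set.empty_inter _⟩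
  obtain ⟨x, hx1, hx2⟩ := hh
  simp [r8] at hx1; subst hx1; exact hx2

lemma not_O_F (h : Lit.pos (.O a) ∈ S) : Lit.pos (.F a) ∉ S := by
  intro h2
  exact noBody hS (hsub (r5_mem a)) rfl ⟨by simp [r5, Set.insert_subset_iff, h, h2], Set.empty_inter _⟩

lemma not_O_nDia (h : Lit.pos (.O a) ∈ S) : Lit.neg (.Dia a) ∉ S := by
  intro h2
  exact noBody hS (hsub (r3_mem a)) rfl ⟨by simp [r3, Set.insert_subset_iff, h, h2], Set.empty_inter _⟩

lemma Do_of_O (h : Lit.pos (.O a) ∈ S) : Lit.pos (.Do a) ∈ S := by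
  rcases Do_dich hS hsub with h1 | h1
  · exact h1
  · exact absurd (nDia_of_nDo hS hsub h1) (not_O_nDia hS hsub h)

lemma nF_of_O (h : Lit.pos (.O a) ∈ S) : Lit.neg (.F a) ∈ S := by
  rcases F_dich hS hsub with h1 | h1
  · exact absurd h1 (not_O_F hS hsub h)
  · exact h1

omit hsub

lemma emergency_mem : Lit.pos (.Happens .emergency) ∈ S := by
  have h := headSat hS rE_mem ⟨Set.empty_subset _, Set.empty_inter _⟩
  obtain ⟨x, hx1, hx2⟩ := h
  simp [rE] at hx1; subst hx1; exact hx2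

lemma not_Do_Do : ¬ (Lit.pos (.Do .help) ∈ S ∧ Lit.pos (.Do .meet) ∈ S) := by
  rintro ⟨h1, h2⟩
  exact noBody hS rDD_mem rfl ⟨by simp [rDD, Set.insert_subset_iff, h1, h2], Set.empty_inter _⟩

lemma nO_of_not_O {a : Const} (hsub : CC a ⊆ PlatoProgram) (h : Lit.pos (.O a) ∉ S) :
    Lit.neg (.O a) ∈ S := (O_dich hS hsub).resolve_left h

end Facts

lemma mem_cases {S : Set (Lit Const)} (hS : IsAnswerSet PlatoProgram S) {x : Lit Const} (hx : x ∈ S) :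
    x = .pos (.act .meet) ∨ x = .pos (.act .help) ∨ x = .pos (.Happens .emergency) ∨
    ∃ a, (a = Const.meet ∨ a = Const.help) ∧
      (x = .pos (.O a) ∨ x = .neg (.O a) ∨ x = .pos (.F a) ∨ x = .neg (.F a) ∨
       x = .pos (.Do a) ∨ x = .neg (.Do a) ∨
       (x = .neg (.Dia a) ∧ Lit.neg (.Do a) ∈ S) ∨
       (x = .pos (.Happens a) ∧ Lit.pos (.Do a) ∈ S)) := by
  have hss : S \ {x} ⊂ S := Set.sdiff_singleton_ssubset.mpr hx
  have h := hS.2.2 _ hss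
  push_neg at h
  obtain ⟨r, hr, hns⟩ := h
  simp only [Satisfies, Classical.not_imp] at hns
  obtain ⟨hb', hnh⟩ := hns
  obtain ⟨hrP, hbS⟩ := hr
  obtain ⟨y, hy1, hy2⟩ := hS.2.1 r ⟨hrP, hbS⟩
  have hyx : y = x := by
    by_contra hne
    exact hnh ⟨y, hy1, hy2, hne⟩
  subst hyx
  rcases hrP with (hc | hc) | hc
  · rw [CC_eq] at hc
    simp only [Set.mem_insert_iff, Set.mem_singleton_iff] at hc
    rcases hc with rfl|rfl|rfl|rfl|rfl|rfl|rfl|rfl|rfl|rfl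
    · simp [rFact] at hy1; subst hy1; exact Or.inl rfl
    · simp only [r1, Set.mem_insert_iff, Set.mem_singleton_iff] at hy1
      exact Or.inr (Or.inr (Or.inr ⟨Const.meet, Or.inl rfl, by rcases hy1 with rfl|rfl <;> simp⟩))
    · simp only [r2, Set.mem_insert_iff, Set.mem_singleton_iff] at hy1
      exact Or.inr (Or.inr (Or.inr ⟨Const.meet, Or.inl rfl, by rcases hy1 with rfl|rfl <;> simp⟩))
    · simp [r3] at hy1
    · simp only [r4, Set.mem_singleton_iff] at hy1
      have hDo : Lit.neg (.Do .meet) ∈ S := (hb'.1 (by simp [r4])).1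
      exact Or.inr (Or.inr (Or.inr ⟨Const.meet, Or.inl rfl, by subst hy1; simp [hDo]⟩))
    · simp [r5] at hy1
    · simp only [r6, Set.mem_insert_iff, Set.mem_singleton_iff] at hy1
      exact Or.inr (Or.inr (Or.inr ⟨Const.meet, Or.inl rfl, by rcases hy1 with rfl|rfl <;> simp⟩))
    · simp [r7] at hy1
    · simp only [r8, Set.mem_singleton_iff] at hy1
      have hDo : Lit.pos (.Do .meet) ∈ S := (hb'.1 (by simp [r8])).1
      exact Or.inr (Or.inr (Or.inr ⟨Const.meet, Or.inl rfl, by subst hy1; simp [hDo]⟩))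
    · simp [r9] at hy1
  · rw [CC_eq] at hc
    simp only [Set.mem_insert_iff, Set.mem_singleton_iff] at hc
    rcases hc with rfl|rfl|rfl|rfl|rfl|rfl|rfl|rfl|rfl|rfl
    · simp [rFact] at hy1; subst hy1; exact Or.inr (Or.inl rfl)
    · simp only [r1, Set.mem_insert_iff, Set.mem_singleton_iff] at hy1
      exact Or.inr (Or.inr (Or.inr ⟨Const.help, Or.inr rfl, by rcases hy1 with rfl|rfl <;> simp⟩))
    · simp only [r2, Set.mem_insert_iff, Set.mem_singleton_iff] at hy1
      exact Or.inr (Or.inr (Or.inr ⟨Const.help, Or.inr rfl, by rcases hy1 with rfl|rfl <;> simp⟩))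
    · simp [r3] at hy1
    · simp only [r4, Set.mem_singleton_iff] at hy1
      have hDo : Lit.neg (.Do .help) ∈ S := (hb'.1 (by simp [r4])).1
      exact Or.inr (Or.inr (Or.inr ⟨Const.help, Or.inr rfl, by subst hy1; simp [hDo]⟩))
    · simp [r5] at hy1
    · simp only [r6, Set.mem_insert_iff, Set.mem_singleton_iff] at hy1
      exact Or.inr (Or.inr (Or.inr ⟨Const.help, Or.inr rfl, by rcases hy1 with rfl|rfl <;> simp⟩))
    · simp [r7] at hy1
    · simp only [r8, Set.mem_singleton_iff] at hy1
      have hDo : Lit.pos (.Do .help) ∈ S := (hb'.1 (by simp [r8])).1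
      exact Or.inr (Or.inr (Or.inr ⟨Const.help, Or.inr rfl, by subst hy1; simp [hDo]⟩))
    · simp [r9] at hy1
  · simp only [Set.mem_insert_iff, Set.mem_singleton_iff] at hc
    rcases hc with rfl|rfl
    · simp at hy1; subst hy1; exact Or.inr (Or.inr (Or.inl rfl))
    · simp at hy1

lemma U_consistent : Consistent PlatoU := by
  rintro p ⟨h1, h2⟩
  simp [PlatoU] at h1 h2
  rcases h1 with rfl|rfl|rfl|rfl|rfl|rfl <;> simp at h2

lemma emptyBody {r : Rule Const} (hpos : r.pos = ∅) (hneg : r.neg = ∅) (S : Set (Lit Const)) :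
    SatBody S r := by
  refine ⟨?_, ?_⟩
  · rw [hpos]; exact Set.empty_subset _
  · rw [hneg]; exact Set.empty_inter _

lemma U_heads : ∀ r ∈ reduct PlatoProgram PlatoU, SatHead PlatoU r := by
  rintro r ⟨hrP, hb⟩
  rcases hrP with (hc | hc) | hc
  · rw [CC_eq] at hc
    simp only [Set.mem_insert_iff, Set.mem_singleton_iff] at hc
    rcases hc with rfl|rfl|rfl|rfl|rfl|rfl|rfl|rfl|rfl|rfl
    · exact ⟨.pos (.act .meet), by simp [rFact, PlatoU]⟩
    · exact ⟨.neg (.O .meet), by simp [r1, PlatoU]⟩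
    · exact ⟨.neg (.F .meet), by simp [r2, PlatoU]⟩
    · exact absurd (hb.1 (show Lit.pos (.O .meet) ∈ (r3 Const.meet).pos by simp [r3])) (by simp [PlatoU])
    · exact ⟨.neg (.Dia .meet), by simp [r4, PlatoU]⟩
    · exact absurd (hb.1 (show Lit.pos (.O .meet) ∈ (r5 Const.meet).pos by simp [r5])) (by simp [PlatoU])
    · exact ⟨.neg (.Do .meet), by simp [r6, PlatoU]⟩
    · exact absurd (hb.1 (show Lit.pos (.F .meet) ∈ (r7 Const.meet).pos by simp [r7])) (by simp [PlatoU])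
    · exact absurd (hb.1 (show Lit.pos (.Do .meet) ∈ (r8 Const.meet).pos by simp [r8])) (by simp [PlatoU])
    · exact absurd (hb.1 (show Lit.pos (.Do .meet) ∈ (r9 Const.meet).pos by simp [r9])) (by simp [PlatoU])
  · rw [CC_eq] at hc
    simp only [Set.mem_insert_iff, Set.mem_singleton_iff] at hc
    rcases hc with rfl|rfl|rfl|rfl|rfl|rfl|rfl|rfl|rfl|rfl
    · exact ⟨.pos (.act .help), by simp [rFact, PlatoU]⟩
    · exact ⟨.pos (.O .help), by simp [r1, PlatoU]⟩
    · exact ⟨.neg (.F .help), by simp [r2, PlatoU]⟩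
    · exact absurd (hb.1 (show Lit.neg (.Dia .help) ∈ (r3 Const.help).pos by simp [r3])) (by simp [PlatoU])
    · exact absurd (hb.1 (show Lit.neg (.Do .help) ∈ (r4 Const.help).pos by simp [r4])) (by simp [PlatoU])
    · exact absurd (hb.1 (show Lit.pos (.F .help) ∈ (r5 Const.help).pos by simp [r5])) (by simp [PlatoU])
    · exact ⟨.pos (.Do .help), by simp [r6, PlatoU]⟩
    · exact absurd (hb.1 (show Lit.pos (.F .help) ∈ (r7 Const.help).pos by simp [r7])) (by simp [PlatoU])
    · exact ⟨.pos (.Happens .help), by simp [r8, PlatoU]⟩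
    · exact absurd (hb.1 (show Lit.neg (.Dia .help) ∈ (r9 Const.help).pos by simp [r9])) (by simp [PlatoU])
  · simp only [Set.mem_insert_iff, Set.mem_singleton_iff] at hc
    rcases hc with rfl|rfl
    · exact ⟨.pos (.Happens .emergency), by simp [PlatoU]⟩
    · exact absurd (hb.1 (show Lit.pos (.Do .meet) ∈ ({Lit.pos (.Do .help), Lit.pos (.Do .meet)} : Set (Lit Const)) by simp)) (by simp [PlatoU])

lemma U_min : ∀ S' : Set (Lit Const), S' ⊂ PlatoU →
    ¬ (∀ r ∈ reduct PlatoProgram PlatoU, Satisfies S' r) := by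
  intro S' hss hall
  rw [Set.ssubset_def] at hss
  obtain ⟨hsub, hnsub⟩ := hss
  apply hnsub
  have hactm : Lit.pos (.act .meet) ∈ S' := by
    obtain ⟨y, hy1, hy2⟩ := hall (rFact .meet)
      ⟨CC_meet_sub (rFact_mem _), emptyBody rfl rfl _⟩ (emptyBody rfl rfl _)
    simp [rFact] at hy1; subst hy1; exact hy2
  have hacth : Lit.pos (.act .help) ∈ S' := by
    obtain ⟨y, hy1, hy2⟩ := hall (rFact .help)
      ⟨CC_help_sub (rFact_mem _), emptyBody rfl rfl _⟩ (emptyBody rfl rfl _)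
    simp [rFact] at hy1; subst hy1; exact hy2
  have hem : Lit.pos (.Happens .emergency) ∈ S' := by
    obtain ⟨y, hy1, hy2⟩ := hall rE ⟨rE_mem, emptyBody rfl rfl _⟩ (emptyBody rfl rfl _)
    simp [rE] at hy1; subst hy1; exact hy2
  have hOh : Lit.pos (.O .help) ∈ S' := by
    obtain ⟨y, hy1, hy2⟩ := hall (r1 .help)
      ⟨CC_help_sub (r1_mem _), ⟨by simp [r1, PlatoU], Set.empty_inter _⟩⟩
      ⟨by simp [r1, hacth], Set.empty_inter _⟩
    simp [r1] at hy1
    rcases hy1 with rfl | rfl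
    · exact hy2
    · exact absurd (hsub hy2) (by simp [PlatoU])
  have hFh : Lit.neg (.F .help) ∈ S' := by
    obtain ⟨y, hy1, hy2⟩ := hall (r2 .help)
      ⟨CC_help_sub (r2_mem _), ⟨by simp [r2, PlatoU], Set.empty_inter _⟩⟩
      ⟨by simp [r2, hacth], Set.empty_inter _⟩
    simp [r2] at hy1
    rcases hy1 with rfl | rfl
    · exact absurd (hsub hy2) (by simp [PlatoU])
    · exact hy2
  have hDoh : Lit.pos (.Do .help) ∈ S' := by
    obtain ⟨y, hy1, hy2⟩ := hall (r6 .help)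
      ⟨CC_help_sub (r6_mem _), ⟨by simp [r6, PlatoU], Set.empty_inter _⟩⟩
      ⟨by simp [r6, hacth], Set.empty_inter _⟩
    simp [r6] at hy1
    rcases hy1 with rfl | rfl
    · exact hy2
    · exact absurd (hsub hy2) (by simp [PlatoU])
  have hHh : Lit.pos (.Happens .help) ∈ S' := by
    obtain ⟨y, hy1, hy2⟩ := hall (r8 .help)
      ⟨CC_help_sub (r8_mem _), ⟨by simp [r8, PlatoU], Set.empty_inter _⟩⟩
      ⟨by simp [r8, hDoh], Set.empty_inter _⟩
    simp [r8] at hy1; subst hy1; exact hy2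
  have hOm : Lit.neg (.O .meet) ∈ S' := by
    obtain ⟨y, hy1, hy2⟩ := hall (r1 .meet)
      ⟨CC_meet_sub (r1_mem _), ⟨by simp [r1, PlatoU], Set.empty_inter _⟩⟩
      ⟨by simp [r1, hactm], Set.empty_inter _⟩
    simp [r1] at hy1
    rcases hy1 with rfl | rfl
    · exact absurd (hsub hy2) (by simp [PlatoU])
    · exact hy2
  have hFm : Lit.neg (.F .meet) ∈ S' := by
    obtain ⟨y, hy1, hy2⟩ := hall (r2 .meet)
      ⟨CC_meet_sub (r2_mem _), ⟨by simp [r2, PlatoU], Set.empty_inter _⟩⟩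
      ⟨by simp [r2, hactm], Set.empty_inter _⟩
    simp [r2] at hy1
    rcases hy1 with rfl | rfl
    · exact absurd (hsub hy2) (by simp [PlatoU])
    · exact hy2
  have hDom : Lit.neg (.Do .meet) ∈ S' := by
    obtain ⟨y, hy1, hy2⟩ := hall (r6 .meet)
      ⟨CC_meet_sub (r6_mem _), ⟨by simp [r6, PlatoU], Set.empty_inter _⟩⟩
      ⟨by simp [r6, hactm], Set.empty_inter _⟩
    simp [r6] at hy1
    rcases hy1 with rfl | rfl
    · exact absurd (hsub hy2) (by simp [PlatoU])
    · exact hy2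
  have hDiam : Lit.neg (.Dia .meet) ∈ S' := by
    obtain ⟨y, hy1, hy2⟩ := hall (r4 .meet)
      ⟨CC_meet_sub (r4_mem _), ⟨by simp [r4, Set.insert_subset_iff, PlatoU], Set.empty_inter _⟩⟩
      ⟨by simp [r4, Set.insert_subset_iff, hDom, hactm], Set.empty_inter _⟩
    simp [r4] at hy1; subst hy1; exact hy2
  intro x hx
  simp [PlatoU] at hx
  rcases hx with rfl|rfl|rfl|rfl|rfl|rfl|rfl|rfl|rfl|rfl|rfl <;> assumption

lemma U_answer : IsAnswerSet PlatoProgram PlatoU :=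
  ⟨U_consistent, U_heads, U_min⟩

def cOm : WeakConstraint Const := ⟨{.pos (.O .meet)}, ∅, 1, 1⟩
def cFm : WeakConstraint Const := ⟨{.pos (.F .meet)}, ∅, 1, 1⟩
def cOh : WeakConstraint Const := ⟨{.pos (.O .help)}, ∅, 1, 1⟩
def cFh : WeakConstraint Const := ⟨{.pos (.F .help)}, ∅, 1, 1⟩
def cE : WeakConstraint Const := ⟨{.neg (.O .help), .pos (.Happens .emergency)}, ∅, 1, 3⟩
def cM : WeakConstraint Const := ⟨{.neg (.O .meet)}, ∅, 1, 2⟩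

lemma PlatoW_eq : PlatoW = {cOm, cFm, cOh, cFh, cE, cM} := by decide

open Classical in
lemma penalty_eval (T : Set (Lit Const)) (lvl : ℕ) :
    penalty PlatoW T lvl =
      (if cOm.l = lvl ∧ Violates T cOm then 1 else 0) +
      (if cFm.l = lvl ∧ Violates T cFm then 1 else 0) +
      (if cOh.l = lvl ∧ Violates T cOh then 1 else 0) +
      (if cFh.l = lvl ∧ Violates T cFh then 1 else 0) +
      (if cE.l = lvl ∧ Violates T cE then 1 else 0) +
      (if cM.l = lvl ∧ Violates T cM then 1 else 0) := by
  unfold penalty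
  rw [PlatoW_eq]
  rw [Finset.sum_insert (by decide), Finset.sum_insert (by decide),
    Finset.sum_insert (by decide), Finset.sum_insert (by decide),
    Finset.sum_insert (by decide), Finset.sum_singleton]
  simp only [cOm, cFm, cOh, cFh, cE, cM]
  omega

lemma violates_cOm (T : Set (Lit Const)) : Violates T cOm ↔ Lit.pos (.O .meet) ∈ T := by
  simp [Violates, cOm]
lemma violates_cFm (T : Set (Lit Const)) : Violates T cFm ↔ Lit.pos (.F .meet) ∈ T := by
  simp [Violates, cFm]
lemma violates_cOh (T : Set (Lit Const)) : Violates T cOh ↔ Lit.pos (.O .help) ∈ T := by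
  simp [Violates, cOh]
lemma violates_cFh (T : Set (Lit Const)) : Violates T cFh ↔ Lit.pos (.F .help) ∈ T := by
  simp [Violates, cFh]
lemma violates_cM (T : Set (Lit Const)) : Violates T cM ↔ Lit.neg (.O .meet) ∈ T := by
  simp [Violates, cM]
lemma violates_cE (T : Set (Lit Const)) :
    Violates T cE ↔ Lit.neg (.O .help) ∈ T ∧ Lit.pos (.Happens .emergency) ∈ T := by
  simp [Violates, cE, Set.insert_subset_iff]

open Classical in
lemma penalty_three (T : Set (Lit Const)) :
    penalty PlatoW T 3 =
      if Lit.neg (.O .help) ∈ T ∧ Lit.pos (.Happens .emergency) ∈ T then 1 else 0 := by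
  rw [penalty_eval, violates_cE T]
  simp [cOm, cFm, cOh, cFh, cE, cM]

open Classical in
lemma penalty_two (T : Set (Lit Const)) :
    penalty PlatoW T 2 = if Lit.neg (.O .meet) ∈ T then 1 else 0 := by
  rw [penalty_eval, violates_cM T]
  simp [cOm, cFm, cOh, cFh, cE, cM]

open Classical in
lemma penalty_one (T : Set (Lit Const)) :
    penalty PlatoW T 1 =
      (if Lit.pos (.O .meet) ∈ T then 1 else 0) +
      (if Lit.pos (.F .meet) ∈ T then 1 else 0) +
      (if Lit.pos (.O .help) ∈ T then 1 else 0) +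
      (if Lit.pos (.F .help) ∈ T then 1 else 0) := by
  rw [penalty_eval, violates_cOm T, violates_cFm T, violates_cOh T, violates_cFh T]
  simp [cOm, cFm, cOh, cFh, cE, cM]

lemma penalty_other (T : Set (Lit Const)) (lvl : ℕ)
    (h1 : lvl ≠ 1) (h2 : lvl ≠ 2) (h3 : lvl ≠ 3) : penalty PlatoW T lvl = 0 := by
  rw [penalty_eval]
  simp [cOm, cFm, cOh, cFh, cE, cM, (Ne.symm h1), (Ne.symm h2), (Ne.symm h3)]

lemma penalty_U_three : penalty PlatoW PlatoU 3 = 0 := by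
  rw [penalty_three]
  simp [PlatoU]

lemma penalty_U_two : penalty PlatoW PlatoU 2 = 1 := by
  rw [penalty_two]
  simp [PlatoU]

lemma penalty_U_one : penalty PlatoW PlatoU 1 = 1 := by
  rw [penalty_one]
  simp [PlatoU]

theorem aux_stmt17 :
    ∀ S : Set (Lit Const), IsOptimalAnswerSet PlatoProgram PlatoW S ↔
      S = PlatoU := by
  intro S
  constructor
  · rintro ⟨hS, hopt⟩
    have h3 : penalty PlatoW S 3 = 0 := by
      by_contra hne
      exact hopt ⟨PlatoU, 3, U_answer, by rw [penalty_U_three]; omega,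
        fun l' hl' => by
          rw [penalty_other PlatoU l' (by omega) (by omega) (by omega),
            penalty_other S l' (by omega) (by omega) (by omega)]⟩
    have hem := emergency_mem hS
    have hnOh : Lit.neg (.O .help) ∉ S := by
      intro h
      rw [penalty_three] at h3
      simp [h, hem] at h3
    have hOh : Lit.pos (.O .help) ∈ S := (O_dich hS CC_help_sub).resolve_right hnOh
    have hDoh : Lit.pos (.Do .help) ∈ S := Do_of_O hS CC_help_sub hOh
    have hHh := Happens_of_Do hS CC_help_sub hDoh
    have hFh : Lit.pos (.F .help) ∉ S := not_O_F hS CC_help_sub hOh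
    have hnFh : Lit.neg (.F .help) ∈ S := nF_of_O hS CC_help_sub hOh
    have hnDoh : Lit.neg (.Do .help) ∉ S := fun h => hS.1 (.Do .help) ⟨hDoh, h⟩
    have hDom : Lit.pos (.Do .meet) ∉ S := fun h => not_Do_Do hS ⟨hDoh, h⟩
    have hnDom : Lit.neg (.Do .meet) ∈ S := (Do_dich hS CC_meet_sub).resolve_left hDom
    have hDiam : Lit.neg (.Dia .meet) ∈ S := nDia_of_nDo hS CC_meet_sub hnDom
    have hOm : Lit.pos (.O .meet) ∉ S := fun h => not_O_nDia hS CC_meet_sub h hDiam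
    have hnOm : Lit.neg (.O .meet) ∈ S := (O_dich hS CC_meet_sub).resolve_left hOm
    have h2eq : penalty PlatoW S 2 = 1 := by rw [penalty_two]; simp [hnOm]
    have hFm : Lit.pos (.F .meet) ∉ S := by
      intro h
      refine hopt ⟨PlatoU, 1, U_answer, ?_, ?_⟩
      · rw [penalty_U_one, penalty_one, if_neg hOm, if_pos h, if_pos hOh, if_neg hFh]
        omega
      · intro l' hl'
        rcases Nat.lt_or_ge l' 4 with h4 | h4
        · interval_cases l'
          · rw [penalty_U_two, h2eq]
          · rw [penalty_U_three, h3]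
        · rw [penalty_other PlatoU l' (by omega) (by omega) (by omega),
            penalty_other S l' (by omega) (by omega) (by omega)]
    have hnFm : Lit.neg (.F .meet) ∈ S := (F_dich hS CC_meet_sub).resolve_left hFm
    have hactm := act_mem hS CC_meet_sub
    have hacth := act_mem hS CC_help_sub
    ext x
    constructor
    · intro hx
      rcases mem_cases hS hx with rfl|rfl|rfl|⟨a, ha, hcs⟩
      · simp [PlatoU]
      · simp [PlatoU]
      · simp [PlatoU]
      · rcases ha with rfl | rfl
        · rcases hcs with rfl|rfl|rfl|rfl|rfl|rfl|⟨rfl, hcond⟩|⟨rfl, hcond⟩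
          · exact absurd hx hOm
          · simp [PlatoU]
          · exact absurd hx hFm
          · simp [PlatoU]
          · exact absurd hx hDom
          · simp [PlatoU]
          · simp [PlatoU]
          · exact absurd hcond hDom
        · rcases hcs with rfl|rfl|rfl|rfl|rfl|rfl|⟨rfl, hcond⟩|⟨rfl, hcond⟩
          · simp [PlatoU]
          · exact absurd hx hnOh
          · exact absurd hx hFh
          · simp [PlatoU]
          · simp [PlatoU]
          · exact absurd hx hnDoh
          · exact absurd hcond hnDoh
          · simp [PlatoU]
    · intro hx
      simp [PlatoU] at hx
      rcases hx with rfl|rfl|rfl|rfl|rfl|rfl|rfl|rfl|rfl|rfl|rfl <;> assumption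
  · rintro rfl
    refine ⟨U_answer, ?_⟩
    rintro ⟨S', lvl, hS', hlt, heq⟩
    have hem := emergency_mem hS'
    have hlvl : lvl = 1 ∨ lvl = 2 := by
      by_contra h
      push_neg at h
      obtain ⟨h1, h2⟩ := h
      have hU0 : penalty PlatoW PlatoU lvl = 0 := by
        by_cases h3 : lvl = 3
        · subst h3; exact penalty_U_three
        · exact penalty_other _ _ h1 h2 h3
      omega
    have key : Lit.neg (.O .help) ∈ S' → False := by
      intro h
      have h3 : penalty PlatoW S' 3 = penalty PlatoW PlatoU 3 := by
        apply heq; omega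
      rw [penalty_three, penalty_U_three, if_pos ⟨h, hem⟩] at h3
      exact one_ne_zero h3
    rcases hlvl with rfl | rfl
    · -- level 1
      rw [penalty_U_one] at hlt
      have hOh : Lit.pos (.O .help) ∉ S' := by
        intro h
        rw [penalty_one, if_pos h] at hlt
        omega
      exact key ((O_dich hS' CC_help_sub).resolve_left hOh)
    · -- level 2
      rw [penalty_U_two] at hlt
      have hnOm : Lit.neg (.O .meet) ∉ S' := by
        intro h
        rw [penalty_two, if_pos h] at hlt
        omega
      have hOm : Lit.pos (.O .meet) ∈ S' := (O_dich hS' CC_meet_sub).resolve_right hnOm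
      have hDom : Lit.pos (.Do .meet) ∈ S' := Do_of_O hS' CC_meet_sub hOm
      have hDoh : Lit.pos (.Do .help) ∉ S' := fun h => not_Do_Do hS' ⟨h, hDom⟩
      have hOh : Lit.pos (.O .help) ∉ S' := fun h => hDoh (Do_of_O hS' CC_help_sub h)
      exact key ((O_dich hS' CC_help_sub).resolve_left hOh)

/-- the Plato program has a unique optimal answer set, namely U
= {act(meet), act(help), Happens(emergency), O(help), ¬F(help), Do(help),
Happens(help), ¬O(meet), ¬F(meet), ¬Do(meet), ¬Dia(meet)}. -/
theorem stmt17 :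
    ∀ S : Set (Lit Const), IsOptimalAnswerSet PlatoProgram PlatoW S ↔
      S = PlatoU := aux_stmt17

end ASP
end
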